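/- Let α, β ∈ ℕ and f, g ∈ C^{2β+4}[-1,1]. Then h_{α,β}^{-1} ∫_{-1}^{1} L̃f(x)·g(x)·(1-x)^α(1+x)^β dx = Ṽ(f,g) + 2(β+1)·b_{β,α}·f'(-1)g(-1), where L̃f(x) = ((x+1)/(x-1)^α) D_x^{β+2}{(x-1)^{α+β+2} D_x^{β+2}[(x+1)^{β+1} f(x)]}, Ṽ(f,g) = h_{α,β}^{-1} ∫_{-1}^{1} D_x^{β+2}[(x+1)^{β+1}f(x)] · D_x^{β+2}[(x+1)^{β+1}g(x)] · (1-x)^{α+β+2} dx, b_{β,α} = (β+2)!·(α+1)_{β+1}, and h_{α,β} = 2^{α+β+1}α!β!/(α+β+1)!. -/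

import Mathlib

/-- Pochhammer symbol `(a)_k` for real `a`. -/
noncomputable def poch (a : ℝ) (k : ℕ) : ℝ := (ascPochhammer ℝ k).eval a

/-- The normalizing constant `h_{α,β} = 2^{α+β+1} α! β! / (α+β+1)!`. -/
noncomputable def hconst (α β : ℕ) : ℝ :=
  2 ^ (α + β + 1) * (Nat.factorial α : ℝ) * (Nat.factorial β : ℝ) /
    (Nat.factorial (α + β + 1) : ℝ)

/-!
Put `F = (x+1)^{β+1} f`, `G = (x+1)^{β+1} g` and `w = (x-1)^{α+β+2} D^{β+2} F`. Away from `x = 1`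
the weighted integrand is `(-1)^α G · D^{β+2} w`. Integrating by parts `β+2` times, `w` vanishes to
order `α+β+2 > β+1` at `1` and `G` to order `β+1` at `-1`, so the only boundary term left is
`D^{β+1}G(-1) · w(-1) = (β+1)! g(-1) · (-2)^{α+β+2} (β+2)! f'(-1)`, and the remaining integral is
`h_{α,β} Ṽ(f,g)` because the signs `(-1)^α (-1)^{β+2} (-1)^{α+β+2}` cancel. The constant is matched
by `h_{α,β}⁻¹ 2^{α+β+1} β! = (α+1)_{β+1}`.
-/

open MeasureTheory Nat

section Leibniz

variable {𝕜 : Type*} [NontriviallyNormedField 𝕜] {q : 𝕜 → 𝕜} {c : 𝕜}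

theorem iteratedDeriv_sub_pow_apply_self (i m : ℕ) :
    iteratedDeriv i (fun x => (x - c) ^ m) c = if i = m then (m ! : 𝕜) else 0 := by
  simp only [iteratedDeriv_comp_sub_const i (fun x => x ^ m) c, sub_self,
    iteratedDeriv_fun_pow_zero, Nat.cast_ite, Nat.cast_zero]

theorem iteratedDeriv_sub_pow_mul_apply_self {k : ℕ} (m : ℕ) (hq : ContDiffAt 𝕜 k q c) :
    iteratedDeriv k (fun x => (x - c) ^ m * q x) c =
      if m ≤ k then (k.choose m * m ! : 𝕜) * iteratedDeriv (k - m) q c else 0 := by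
  rw [iteratedDeriv_fun_mul (by fun_prop) hq]
  simp only [iteratedDeriv_sub_pow_apply_self, mul_ite, mul_zero, ite_mul, zero_mul,
    Finset.sum_ite_eq', Finset.mem_range, Nat.lt_succ_iff]

theorem iteratedDeriv_sub_pow_mul_apply_self_of_lt {k m : ℕ} (hkm : k < m)
    (hq : ContDiffAt 𝕜 k q c) : iteratedDeriv k (fun x => (x - c) ^ m * q x) c = 0 := by
  rw [iteratedDeriv_sub_pow_mul_apply_self m hq, if_neg (not_le.mpr hkm)]

theorem iteratedDeriv_self_sub_pow_mul_apply_self {m : ℕ} (hq : ContDiffAt 𝕜 m q c) :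
    iteratedDeriv m (fun x => (x - c) ^ m * q x) c = m ! * q c := by
  simp [iteratedDeriv_sub_pow_mul_apply_self m hq]

theorem iteratedDeriv_succ_sub_pow_mul_apply_self {m : ℕ} (hq : ContDiffAt 𝕜 (m + 1) q c) :
    iteratedDeriv (m + 1) (fun x => (x - c) ^ m * q x) c = (m + 1)! * deriv q c := by
  rw [iteratedDeriv_sub_pow_mul_apply_self m (by exact_mod_cast hq), if_pos (by omega),
    Nat.add_sub_cancel_left, iteratedDeriv_one, Nat.choose_succ_self_right, Nat.factorial_succ]
  push_cast
  ring

end Leibniz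

theorem integral_mul_iteratedDeriv_eq {u w : ℝ → ℝ} {n : ℕ} (hu : ContDiff ℝ n u)
    (hw : ContDiff ℝ n w) (a b : ℝ) :
    ∫ x in a..b, u x * iteratedDeriv n w x =
      ∑ j ∈ Finset.range n, (-1) ^ j * (iteratedDeriv j u b * iteratedDeriv (n - 1 - j) w b -
          iteratedDeriv j u a * iteratedDeriv (n - 1 - j) w a) +
        (-1) ^ n * ∫ x in a..b, iteratedDeriv n u x * w x := by
  induction n generalizing w with
  | zero => simp
  | succ n ih =>
    have hw' : ContDiff ℝ (n + 1) w := by exact_mod_cast hw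
    have hu' : ContDiff ℝ (n + 1) u := by exact_mod_cast hu
    have parts : ∫ x in a..b, iteratedDeriv n u x * deriv w x =
        iteratedDeriv n u b * w b - iteratedDeriv n u a * w a -
          ∫ x in a..b, iteratedDeriv (n + 1) u x * w x := by
      refine intervalIntegral.integral_mul_deriv_eq_deriv_mul (fun x _ => ?_) (fun x _ => ?_)
        ((hu.continuous_iteratedDeriv' _).intervalIntegrable a b)
        ((hw'.continuous_deriv le_add_self).intervalIntegrable a b)
      · rw [iteratedDeriv_succ]
        exact (hu'.differentiable_iteratedDeriv' n x).hasDerivAt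
      · exact (hw'.differentiable (by simp) x).hasDerivAt
    have shift : ∀ j ∈ Finset.range n,
        iteratedDeriv (n - 1 - j) (deriv w) = iteratedDeriv (n + 1 - 1 - j) w := by
      intro j hj
      have hjn := Finset.mem_range.mp hj
      rw [← iteratedDeriv_succ', show n - 1 - j + 1 = n + 1 - 1 - j by omega]
    rw [iteratedDeriv_succ', ih (hu.of_le (by norm_cast; omega)) hw'.deriv', parts,
      Finset.sum_range_succ, Finset.sum_congr rfl fun j hj => by rw [shift j hj],
      Nat.add_sub_cancel, Nat.sub_self, iteratedDeriv_zero, pow_succ]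
    ring

theorem integral_mul_iteratedDeriv_of_vanishing {u w : ℝ → ℝ} {m : ℕ} {a b : ℝ}
    (hu : ContDiff ℝ (m + 1 : ℕ) u) (hw : ContDiff ℝ (m + 1 : ℕ) w)
    (hua : ∀ j < m, iteratedDeriv j u a = 0) (hwb : ∀ j ≤ m, iteratedDeriv j w b = 0) :
    ∫ x in a..b, u x * iteratedDeriv (m + 1) w x =
      (-1) ^ (m + 1) * (iteratedDeriv m u a * w a +
        ∫ x in a..b, iteratedDeriv (m + 1) u x * w x) := by
  rw [integral_mul_iteratedDeriv_eq hu hw, Finset.sum_range_succ,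
    Finset.sum_eq_zero fun j hj => ?_, Nat.add_sub_cancel, Nat.sub_self, iteratedDeriv_zero,
    ← iteratedDeriv_zero (f := w), hwb 0 (Nat.zero_le m), pow_succ]
  · ring
  · have hjm := Finset.mem_range.mp hj
    rw [hua j hjm, hwb _ (by omega)]
    ring

theorem integral_sub_pow_mul_mul_iteratedDeriv_sub_pow_mul {q p : ℝ → ℝ} {m n : ℕ} {a b : ℝ}
    (hmn : m < n) (hq : ContDiff ℝ (m + 1 : ℕ) q) (hp : ContDiff ℝ (m + 1 : ℕ) p) :
    ∫ x in a..b, (x - a) ^ m * q x * iteratedDeriv (m + 1) (fun x => (x - b) ^ n * p x) x =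
      (-1) ^ (m + 1 + n) * (m ! * q a * (b - a) ^ n * p a +
        ∫ x in a..b, p x * iteratedDeriv (m + 1) (fun x => (x - a) ^ m * q x) x * (b - x) ^ n) := by
  have hq' : ContDiff ℝ m q := hq.of_le (by norm_cast; omega)
  have hflip (x : ℝ) : (x - b) ^ n = (-1) ^ n * (b - x) ^ n := by
    rw [← mul_pow, neg_one_mul, neg_sub]
  have hint : ∫ x in a..b,
        iteratedDeriv (m + 1) (fun x => (x - a) ^ m * q x) x * ((x - b) ^ n * p x) =
      (-1) ^ n * ∫ x in a..b,
        p x * iteratedDeriv (m + 1) (fun x => (x - a) ^ m * q x) x * (b - x) ^ n := by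
    rw [← intervalIntegral.integral_const_mul]
    congr 1 with x
    rw [hflip]
    ring
  rw [integral_mul_iteratedDeriv_of_vanishing (by fun_prop) (by fun_prop)
    (fun j hj => iteratedDeriv_sub_pow_mul_apply_self_of_lt hj
      (hq'.of_le (by norm_cast; omega)).contDiffAt)
    (fun j hj => iteratedDeriv_sub_pow_mul_apply_self_of_lt (by omega)
      (hp.of_le (by norm_cast; omega)).contDiffAt),
    iteratedDeriv_self_sub_pow_mul_apply_self hq'.contDiffAt, hint, hflip a]
  ring

/-- `(1 - x)^α / (x - 1)^α = (-1)^α` off the null set `{1}`, where the division is junk. -/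
theorem integral_div_sub_one_pow_mul_weight (α β : ℕ) (y g : ℝ → ℝ) (a b : ℝ) :
    ∫ x in a..b, (x + 1) / (x - 1) ^ α * y x * g x * ((1 - x) ^ α * (1 + x) ^ β) =
      (-1) ^ α * ∫ x in a..b, (x + 1) ^ (β + 1) * g x * y x := by
  rw [← intervalIntegral.integral_const_mul]
  refine intervalIntegral.integral_congr_ae ?_
  filter_upwards [measure_eq_zero_iff_ae_notMem.mp (Real.volume_singleton (a := 1))] with x hx _
  have hx1 : x - 1 ≠ 0 := sub_ne_zero.mpr hx
  rw [show 1 - x = -(x - 1) by ring, neg_pow]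
  field_simp
  ring

theorem hconst_inv_mul_two_pow_mul_factorial (α β : ℕ) :
    (hconst α β)⁻¹ * (2 ^ (α + β + 1) * β !) = poch (α + 1) (β + 1) := by
  have hfact : (α ! : ℝ) * poch (α + 1) (β + 1) = (α + β + 1)! := by
    rw [poch, ← Nat.cast_succ, ascPochhammer_nat_eq_natCast_ascFactorial, ← Nat.cast_mul,
      Nat.factorial_mul_ascFactorial, add_assoc]
  rw [hconst, ← hfact]
  field_simp


/-- for `f, g ∈ C^{2β+4}[-1,1]`,
`h⁻¹ ∫ (L̃f) g (1-x)^α (1+x)^β dx = Ṽ(f,g) + 2(β+1) b_{β,α} f'(-1) g(-1)`,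
with `b_{β,α} = (β+2)! (α+1)_{β+1}`. -/
theorem Ltilde_symmetric_form (α β : ℕ) (f g : ℝ → ℝ)
    (hf : ContDiff ℝ ((2 * β + 4 : ℕ) : ℕ∞) f) (hg : ContDiff ℝ ((2 * β + 4 : ℕ) : ℕ∞) g) :
    (hconst α β)⁻¹ *
      (∫ x in (-1 : ℝ)..1,
        (((x + 1) / (x - 1) ^ α) *
          deriv^[β + 2] (fun t => (t - 1) ^ (α + β + 2) *
            deriv^[β + 2] (fun s => (s + 1) ^ (β + 1) * f s) t) x)
          * g x * ((1 - x) ^ α * (1 + x) ^ β))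
    = (hconst α β)⁻¹ *
        (∫ x in (-1 : ℝ)..1,
          deriv^[β + 2] (fun s => (s + 1) ^ (β + 1) * f s) x *
            deriv^[β + 2] (fun s => (s + 1) ^ (β + 1) * g s) x * (1 - x) ^ (α + β + 2))
      + 2 * ((β : ℝ) + 1) * ((Nat.factorial (β + 2) : ℝ) * poch ((α : ℝ) + 1) (β + 1)) *
          deriv f (-1) * g (-1) := by
  replace hf : ContDiff ℝ (2 * β + 4 : ℕ) f := hf
  replace hg : ContDiff ℝ (2 * β + 4 : ℕ) g := hg
  have shift (h : ℝ → ℝ) (s : ℝ) : (s + 1) ^ (β + 1) * h s = (s - -1) ^ (β + 1) * h s := by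
    rw [sub_neg_eq_add]
  simp only [← iteratedDeriv_eq_iterate, integral_div_sub_one_pow_mul_weight, shift,
    show β + 2 = β + 1 + 1 from rfl]
  set DF := iteratedDeriv (β + 1 + 1) fun s => (s - -1) ^ (β + 1) * f s
  have hDF : ContDiff ℝ (β + 1 + 1 : ℕ) DF := by
    have hF : ContDiff ℝ (β + 1 + 1 + (β + 1 + 1) : ℕ) fun s => (s - -1) ^ (β + 1) * f s := by
      rw [show β + 1 + 1 + (β + 1 + 1) = 2 * β + 4 by ring]; fun_prop
    simpa only [DF, iteratedDeriv_eq_iterate] using hF.iterate_deriv' _ _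
  have hDF_neg_one : DF (-1) = (β + 1 + 1)! * deriv f (-1) :=
    iteratedDeriv_succ_sub_pow_mul_apply_self (hf.of_le (by norm_cast; omega)).contDiffAt
  have hsign : (-1 : ℝ) ^ α * (-1) ^ (β + 1 + 1 + (α + β + 2)) = 1 := by
    rw [← pow_add]; exact Even.neg_one_pow ⟨α + β + 2, by ring⟩
  rw [integral_sub_pow_mul_mul_iteratedDeriv_sub_pow_mul (by omega)
      (hg.of_le (by norm_cast; omega)) hDF,
    ← mul_assoc ((-1 : ℝ) ^ α), hsign, one_mul, hDF_neg_one,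
    ← hconst_inv_mul_two_pow_mul_factorial, Nat.factorial_succ β]
  push_cast
  ring
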